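/- arXiv:math/9807159 — 7 statements merged into one kernel-verified Lean document; each statement's English description precedes it below -/
import Mathlib

section
/- Let Ω be the root system of a complex simple Lie algebra, Π the simple roots, Γ ⊆ Π, and let Ω̄_Γ denote the set of nonzero images of Ω under the projection h* → h*/h*_Γ (the 'quasiroots'). If β̄₁,…,β̄_k, β̄ are quasiroots with β̄ = β̄₁ + ⋯ + β̄_k, then there exist roots β₁,…,β_k, β in Ω representing these quasiroots such that β = β₁ + ⋯ + β_k. -/
open Finset
open scoped RealInnerProductSpace

private lemma measure_step {V : Type*} [DecidableEq V] (c : V →₀ ℤ) (α : V) (hα : c α ≠ 0)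
    (ε : ℤ) (hε : ε = if 0 < c α then 1 else -1) :
    ((c - Finsupp.single α ε).sum fun _ n => n.natAbs) + 1 = c.sum fun _ n => n.natAbs := by
  have hmem : α ∈ c.support := Finsupp.mem_support_iff.2 hα
  have hs : (c - Finsupp.single α ε).support ⊆ c.support := by
    intro v hv
    rw [Finsupp.mem_support_iff] at hv ⊢
    intro h
    apply hv
    rw [Finsupp.sub_apply, h, Finsupp.single_apply]
    by_cases hv' : α = v
    · exact absurd (hv' ▸ h) hα
    · simp [hv']
  rw [Finsupp.sum_of_support_subset _ hs _ (fun _ _ => rfl), Finsupp.sum,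
      ← Finset.add_sum_erase _ _ hmem, ← Finset.add_sum_erase _ (fun v => (c v).natAbs) hmem]
  have hrest : ∑ v ∈ c.support.erase α, ((c - Finsupp.single α ε) v).natAbs
      = ∑ v ∈ c.support.erase α, (c v).natAbs := by
    refine Finset.sum_congr rfl fun v hv => ?_
    have hvα : v ≠ α := Finset.ne_of_mem_erase hv
    rw [Finsupp.sub_apply, Finsupp.single_apply, if_neg (Ne.symm hvα), sub_zero]
  rw [hrest]
  have hhead : ((c - Finsupp.single α ε) α).natAbs + 1 = (c α).natAbs := by
    rw [Finsupp.sub_apply, Finsupp.single_apply, if_pos rfl]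
    rcases lt_or_gt_of_ne hα with h | h
    · rw [hε, if_neg (by omega)]; omega
    · rw [hε, if_pos h]; omega
  omega

private lemma step_lemma {V : Type*} [NormedAddCommGroup V] [InnerProductSpace ℝ V]
    (Ω : Set V)
    (hneg : ∀ α ∈ Ω, -α ∈ Ω)
    (hsub : ∀ α ∈ Ω, ∀ β ∈ Ω, α ≠ β → 0 < ⟪α, β⟫ → α - β ∈ Ω)
    (Γ : Set V) (hΓΩ : Γ ⊆ Ω)
    {k : ℕ} (bbar : Fin k → V ⧸ Submodule.span ℝ Γ) (βbar : V ⧸ Submodule.span ℝ Γ)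
    (hb0 : ∀ i, bbar i ≠ 0) (hβ0 : βbar ≠ 0) :
    ∀ (n : ℕ) (βs : Fin k → V) (β : V) (c : V →₀ ℤ),
      (∀ i, βs i ∈ Ω ∧ Submodule.Quotient.mk (βs i) = bbar i) →
      β ∈ Ω → Submodule.Quotient.mk β = βbar →
      (↑c.support : Set V) ⊆ Γ →
      Finsupp.linearCombination ℤ id c = ∑ i, βs i - β →
      (c.sum fun _ m => m.natAbs) ≤ n →
      ∃ (βs' : Fin k → V) (β' : V),
        (∀ i, βs' i ∈ Ω ∧ Submodule.Quotient.mk (βs' i) = bbar i) ∧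
        β' ∈ Ω ∧ Submodule.Quotient.mk β' = βbar ∧ β' = ∑ i, βs' i := by
  classical
  intro n
  induction n with
  | zero =>
    intro βs β c h1 h2 h3 h4 h5 h6
    have hc0 : c = 0 := by
      ext v
      simp only [Finsupp.coe_zero, Pi.zero_apply]
      by_contra hv
      have hvs : v ∈ c.support := Finsupp.mem_support_iff.2 hv
      have h6' : ∑ v ∈ c.support, (c v).natAbs ≤ 0 := h6
      have hle : (c v).natAbs ≤ ∑ v ∈ c.support, (c v).natAbs :=
        Finset.single_le_sum (f := fun v => (c v).natAbs) (fun _ _ => Nat.zero_le _) hvs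
      omega
    rw [hc0, map_zero] at h5
    exact ⟨βs, β, h1, h2, h3, (sub_eq_zero.1 h5.symm).symm⟩
  | succ n ih =>
    intro βs β c h1 h2 h3 h4 h5 h6
    set γ : V := ∑ i, βs i - β with hγdef
    by_cases hγ0 : γ = 0
    · exact ⟨βs, β, h1, h2, h3, (sub_eq_zero.1 hγ0).symm⟩
    -- γ ≠ 0, so ⟪γ,γ⟫ > 0
    have hγpos : (0:ℝ) < ⟪γ, γ⟫ := by
      rcases lt_or_ge (0:ℝ) ⟪γ, γ⟫ with h | h
      · exact h
      · exact absurd (real_inner_self_nonpos.1 h) hγ0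
    -- key: given x ∈ Ω with nonzero image and ⟪γ,x⟫ > 0, produce α ∈ Γ, ε with the
    -- properties needed
    have key : ∀ x : V, x ∈ Ω → Submodule.Quotient.mk x ≠ (0 : V ⧸ Submodule.span ℝ Γ) →
        0 < ⟪γ, x⟫ →
        ∃ (α : V) (ε : ℤ), α ∈ Γ ∧ x - ε • α ∈ Ω ∧
          (ε • α : V) ∈ Submodule.span ℝ Γ ∧
          ((c - Finsupp.single α ε).sum fun _ m => m.natAbs) ≤ n ∧
          (↑(c - Finsupp.single α ε).support : Set V) ⊆ Γ ∧
          Finsupp.linearCombination ℤ id (c - Finsupp.single α ε) = γ - ε • α := by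
      intro x hxΩ hxne hxpos
      have hinner : ∑ v ∈ c.support, (c v : ℝ) * ⟪v, x⟫ = ⟪γ, x⟫ := by
        rw [← h5, Finsupp.linearCombination_apply, Finsupp.sum, sum_inner]
        refine Finset.sum_congr rfl fun v _ => ?_
        rw [← Int.cast_smul_eq_zsmul ℝ, real_inner_smul_left]
        rfl
      obtain ⟨α, hαs, hαpos⟩ : ∃ α ∈ c.support, (0:ℝ) < (c α : ℝ) * ⟪α, x⟫ := by
        have hlt : ∑ v ∈ c.support, (0:ℝ) < ∑ v ∈ c.support, (c v : ℝ) * ⟪v, x⟫ := by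
          rw [hinner]; simpa using hxpos
        exact Finset.exists_lt_of_sum_lt hlt
      have hαΓ : α ∈ Γ := h4 hαs
      have hcα : c α ≠ 0 := Finsupp.mem_support_iff.1 hαs
      set ε : ℤ := if 0 < c α then 1 else -1 with hε
      have hxα : 0 < ⟪x, ε • α⟫ := by
        rw [← Int.cast_smul_eq_zsmul ℝ, real_inner_smul_right, real_inner_comm]
        rcases mul_pos_iff.1 hαpos with ⟨ha, hb⟩ | ⟨ha, hb⟩
        · have : ε = 1 := by rw [hε, if_pos (by exact_mod_cast ha)]
          rw [this]; simpa using hb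
        · have : ε = -1 := by
            have : ¬ (0 < c α) := by
              have : (c α : ℝ) < 0 := ha
              exact_mod_cast not_lt.2 (le_of_lt (by exact_mod_cast this))
            rw [hε, if_neg this]
          rw [this]; push_cast; nlinarith
      have hεαΩ : (ε • α : V) ∈ Ω := by
        rcases lt_or_gt_of_ne hcα with h | h
        · have : ε = -1 := by rw [hε, if_neg (by omega)]
          rw [this, neg_zsmul, one_zsmul]
          exact hneg α (hΓΩ hαΓ)
        · have : ε = 1 := by rw [hε, if_pos h]
          rw [this, one_zsmul]
          exact hΓΩ hαΓ
      have hεαspan : (ε • α : V) ∈ Submodule.span ℝ Γ :=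
        zsmul_mem (Submodule.subset_span hαΓ) ε
      have hxneα : x ≠ ε • α := by
        intro h
        apply hxne
        rw [h]
        exact (Submodule.Quotient.mk_eq_zero _).2 hεαspan
      have hroot : x - ε • α ∈ Ω := hsub x hxΩ _ hεαΩ hxneα hxα
      refine ⟨α, ε, hαΓ, hroot, hεαspan, ?_, ?_, ?_⟩
      · have := measure_step c α hcα ε hε
        omega
      · intro v hv
        have hv' := Finsupp.support_sub (f := c) (g := Finsupp.single α ε) hv
        rcases Finset.mem_union.1 hv' with h | h
        · exact h4 h
        · have := Finsupp.support_single_subset h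
          simp only [Finset.mem_singleton] at this
          exact this ▸ hαΓ
      · rw [map_sub, h5, Finsupp.linearCombination_single]
        rfl
    -- the positive term is either one of the βs i or -β
    have hexp : ⟪γ, γ⟫ = (∑ i, ⟪γ, βs i⟫) + ⟪γ, -β⟫ := by
      conv_lhs => rw [show ⟪γ, γ⟫ = ⟪γ, ∑ i, βs i - β⟫ from rfl]
      rw [sub_eq_add_neg, inner_add_right, inner_sum]
    by_cases hcase : 0 < ⟪γ, -β⟫
    · -- adjust β
      have hmkβ : Submodule.Quotient.mk (-β) ≠ (0 : V ⧸ Submodule.span ℝ Γ) := by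
        rw [Submodule.Quotient.mk_neg, h3, neg_ne_zero]
        exact hβ0
      obtain ⟨α, ε, hαΓ, hroot, hspan, hN, hsupp, hlin⟩ :=
        key (-β) (hneg β h2) hmkβ hcase
      have hβ'Ω : β + ε • α ∈ Ω := by
        have := hneg _ hroot
        rwa [show -(-β - ε • α) = β + ε • α by abel] at this
      refine ih βs (β + ε • α) (c - Finsupp.single α ε) h1 hβ'Ω ?_ hsupp ?_ hN
      · rw [Submodule.Quotient.mk_add, (Submodule.Quotient.mk_eq_zero _).2 hspan,
          add_zero, h3]
      · rw [hlin, hγdef]; abel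
    · -- adjust some βs i
      have hsumpos : 0 < ∑ i, ⟪γ, βs i⟫ := by
        push_neg at hcase
        calc (0:ℝ) < ⟪γ, γ⟫ := hγpos
        _ = (∑ i, ⟪γ, βs i⟫) + ⟪γ, -β⟫ := hexp
        _ ≤ ∑ i, ⟪γ, βs i⟫ := by linarith
      obtain ⟨i₀, _, hipos⟩ : ∃ i ∈ Finset.univ, (0:ℝ) < ⟪γ, βs i⟫ :=
        Finset.exists_lt_of_sum_lt (by simpa using hsumpos)
      have hmki : Submodule.Quotient.mk (βs i₀) ≠ (0 : V ⧸ Submodule.span ℝ Γ) := by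
        rw [(h1 i₀).2]; exact hb0 i₀
      obtain ⟨α, ε, hαΓ, hroot, hspan, hN, hsupp, hlin⟩ :=
        key (βs i₀) (h1 i₀).1 hmki hipos
      set βs' : Fin k → V := Function.update βs i₀ (βs i₀ - ε • α) with hβs'
      have hsum' : ∑ i, βs' i = (∑ i, βs i) - ε • α := by
        rw [hβs', Finset.sum_update_of_mem (Finset.mem_univ i₀),
          Finset.sum_eq_sum_sdiff_singleton_add (Finset.mem_univ i₀) βs]
        abel
      refine ih βs' β (c - Finsupp.single α ε) ?_ h2 h3 hsupp ?_ hN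
      · intro i
        by_cases hi : i = i₀
        · subst hi
          rw [hβs', Function.update_self]
          refine ⟨hroot, ?_⟩
          rw [Submodule.Quotient.mk_sub, (Submodule.Quotient.mk_eq_zero _).2 hspan, sub_zero]
          exact (h1 i).2
        · rw [hβs', Function.update_of_ne hi]
          exact h1 i
      · rw [hlin, hsum', hγdef]; abel

/-- With `Ω` the root system, `Psimple` the simple roots, `Γ ⊆ Psimple`,
and `Ω̄_Γ` the set of nonzero images of `Ω` under the projection `h* → h*/h*_Γ`
(the quasiroots): if `β̄₁, …, β̄_k, β̄` are quasiroots with `β̄ = β̄₁ + ⋯ + β̄_k`, then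
there exist representing roots `β₁, …, β_k, β ∈ Ω` with `β = β₁ + ⋯ + β_k`. -/
theorem stmt1
    {V : Type*} [NormedAddCommGroup V] [InnerProductSpace ℝ V]
    (Ω : Set V) (hfin : Ω.Finite) (h0 : (0 : V) ∉ Ω)
    (hneg : ∀ α ∈ Ω, -α ∈ Ω)
    (hsub : ∀ α ∈ Ω, ∀ β ∈ Ω, α ≠ β → 0 < ⟪α, β⟫ → α - β ∈ Ω)
    (Psimple : Set V) (hP : Psimple ⊆ Ω)
    (hindep : LinearIndependent ℝ (fun x : Psimple => (x : V)))
    (hbase : ∀ α ∈ Ω, ∃ c : V →₀ ℤ, (↑c.support : Set V) ⊆ Psimple ∧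
      α = c.sum (fun v n => n • v) ∧ ((∀ v, 0 ≤ c v) ∨ (∀ v, c v ≤ 0)))
    (Γ : Set V) (hΓ : Γ ⊆ Psimple)
    (k : ℕ) (bbar : Fin k → V ⧸ Submodule.span ℝ Γ) (βbar : V ⧸ Submodule.span ℝ Γ)
    (hb : ∀ i, bbar i ≠ 0 ∧ ∃ ρ ∈ Ω, Submodule.Quotient.mk ρ = bbar i)
    (hβq : βbar ≠ 0 ∧ ∃ ρ ∈ Ω, Submodule.Quotient.mk ρ = βbar)
    (hsum : βbar = ∑ i, bbar i) :
    ∃ (βs : Fin k → V) (β : V),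
      (∀ i, βs i ∈ Ω ∧ Submodule.Quotient.mk (βs i) = bbar i) ∧
      β ∈ Ω ∧ Submodule.Quotient.mk β = βbar ∧ β = ∑ i, βs i := by
  classical
  obtain ⟨hβ0, ρβ, hρβΩ, hρβ⟩ := hβq
  choose ρ hρΩ hρ using fun i => (hb i).2
  -- choose returns for each i an element; fix types
  obtain ⟨ρ, hρprop⟩ : ∃ ρ : Fin k → V, ∀ i, ρ i ∈ Ω ∧ Submodule.Quotient.mk (ρ i) = bbar i := by
    choose ρ h1 h2 using fun i => (hb i).2
    exact ⟨ρ, fun i => ⟨h1 i, h2 i⟩⟩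
  set γ : V := ∑ i, ρ i - ρβ with hγdef
  -- γ lies in span ℝ Γ
  have hγspan : γ ∈ Submodule.span ℝ Γ := by
    rw [← Submodule.Quotient.mk_eq_zero, ← Submodule.mkQ_apply, hγdef, map_sub, map_sum,
      show (Submodule.span ℝ Γ).mkQ ρβ = βbar from hρβ,
      Finset.sum_congr rfl
        (fun i _ => show (Submodule.span ℝ Γ).mkQ (ρ i) = bbar i from (hρprop i).2),
      ← hsum, sub_self]
  -- integer coefficient vector for γ, supported on Psimple
  obtain ⟨d, hdsupp, hdval⟩ : ∃ d : V →₀ ℤ, (↑d.support : Set V) ⊆ Psimple ∧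
      Finsupp.linearCombination ℤ id d = γ := by
    choose cf hc1 hc2 hc3 using fun i => hbase (ρ i) (hρprop i).1
    obtain ⟨cβ, hcβ1, hcβ2, hcβ3⟩ := hbase ρβ hρβΩ
    refine ⟨(∑ i, cf i) - cβ, ?_, ?_⟩
    · intro v hv
      have hv' := Finsupp.support_sub (f := ∑ i, cf i) (g := cβ) hv
      rcases Finset.mem_union.1 hv' with h | h
      · have := Finsupp.support_finset_sum (s := Finset.univ) (f := cf) h
        obtain ⟨i, _, hi⟩ := Finset.mem_biUnion.1 this
        exact hc1 i hi
      · exact hcβ1 h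
    · rw [map_sub, map_sum, hγdef]
      have h1 : ∀ i, Finsupp.linearCombination ℤ id (cf i) = ρ i := by
        intro i
        rw [Finsupp.linearCombination_apply]
        exact (hc2 i).symm
      have h2 : Finsupp.linearCombination ℤ id cβ = ρβ := by
        rw [Finsupp.linearCombination_apply]
        exact hcβ2.symm
      rw [h2]
      exact congrArg₂ (· - ·) (Finset.sum_congr rfl fun i _ => h1 i) rfl
  -- by linear independence, d is supported on Γ
  have hdΓ : (↑d.support : Set V) ⊆ Γ := by
    set dR : V →₀ ℝ := d.mapRange (Int.cast) (Int.cast_zero) with hdR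
    have hdRval : Finsupp.linearCombination ℝ id dR = γ := by
      rw [← hdval, Finsupp.linearCombination_apply, Finsupp.linearCombination_apply, hdR,
        Finsupp.sum_mapRange_index (by simp)]
      exact Finsupp.sum_congr fun v _ => Int.cast_smul_eq_zsmul ℝ _ _
    obtain ⟨e, hesupp, heval⟩ := Submodule.mem_span_set.1 hγspan
    have heval' : Finsupp.linearCombination ℝ id e = γ := by
      rw [Finsupp.linearCombination_apply]; exact heval
    have hli := linearIndepOn_iff.1 (linearIndependent_subtype_iff.1 hindep)
    have hdRsupp : (↑dR.support : Set V) ⊆ Psimple := by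
      intro v hv
      exact hdsupp (Finsupp.support_mapRange hv)
    have hzero : dR - e = 0 := by
      refine hli _ ?_ ?_
      · rw [Finsupp.mem_supported]
        intro v hv
        rcases Finset.mem_union.1 (Finsupp.support_sub hv) with h | h
        · exact hdRsupp h
        · exact hΓ (hesupp h)
      · rw [map_sub, hdRval, heval', sub_self]
    have hde : dR = e := by rwa [sub_eq_zero] at hzero
    intro v hv
    have hdv : d v ≠ 0 := Finsupp.mem_support_iff.1 hv
    have : dR v ≠ 0 := by
      rw [hdR]
      simpa using hdv
    rw [hde] at this
    exact hesupp (Finsupp.mem_support_iff.2 this)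
  exact step_lemma Ω hneg hsub Γ (hΓ.trans hP) bbar βbar (fun i => (hb i).1) hβ0
    (d.sum fun _ m => m.natAbs) ρ ρβ d hρprop hρβΩ hρβ hdΓ hdval le_rfl
end

section
/- Let K ≠ 0 and λ be a function nonvanishing on all quasiroots such that λ is additive on admissible pairs, and let c be a function on positive quasiroots. Then the pair of conditions { c(ᾱ)λ(ᾱ)² + c(β̄)λ(β̄)² = c(ᾱ+β̄)λ(ᾱ+β̄)² and c(ᾱ+β̄)(c(ᾱ)+c(β̄)) = c(ᾱ)c(β̄) + K² } for an admissible pair (ᾱ,β̄) is equivalent to the existence of a sign ε ∈ {+1,−1} (the same in both equations) such that c(β̄)λ(β̄) = c(ᾱ)λ(ᾱ) + εKλ(ᾱ+β̄) and c(ᾱ+β̄)λ(ᾱ+β̄) = c(ᾱ)λ(ᾱ) + εKλ(β̄). -/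
/-- Let `K ≠ 0`, `l` a function additive on admissible pairs of
quasiroots and nonvanishing on quasiroots, and `c` a function on quasiroots.  For an
admissible pair `(a, b)` the system
`c(a)l(a)² + c(b)l(b)² = c(a+b)l(a+b)²` and `c(a+b)(c(a)+c(b)) = c(a)c(b) + K²`
holds iff there is a sign `ε ∈ {1, -1}` (the same in both equations) with
`c(b)l(b) = c(a)l(a) + εK l(a+b)` and `c(a+b)l(a+b) = c(a)l(a) + εK l(b)`. -/
theorem stmt6
    {V : Type*} [AddCommGroup V]
    (Q : Set V) (l c : V → ℂ) (K : ℂ) (hK : K ≠ 0)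
    (hadd : ∀ a ∈ Q, ∀ b ∈ Q, a + b ∈ Q → l (a + b) = l a + l b)
    (hlne : ∀ q ∈ Q, l q ≠ 0)
    (a b : V) (ha : a ∈ Q) (hb : b ∈ Q) (hab : a + b ∈ Q) :
    (c a * l a ^ 2 + c b * l b ^ 2 = c (a + b) * l (a + b) ^ 2 ∧
      c (a + b) * (c a + c b) = c a * c b + K ^ 2)
    ↔ ∃ ε : ℂ, (ε = 1 ∨ ε = -1) ∧
        c b * l b = c a * l a + ε * K * l (a + b) ∧
        c (a + b) * l (a + b) = c a * l a + ε * K * l b := by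
  have hs : l (a + b) = l a + l b := hadd a ha b hb hab
  have hx := hlne a ha
  have hy := hlne b hb
  have hxy := hlne _ hab
  rw [hs] at hxy
  rw [hs]
  constructor
  · rintro ⟨h1, h2⟩
    have key : (c a * l a - c b * l b - K * (l a + l b)) *
        (c a * l a - c b * l b + K * (l a + l b)) = 0 := by
      linear_combination (c a + c b) * h1 + (l a + l b) ^ 2 * h2
    rcases mul_eq_zero.mp key with h | h
    · refine ⟨-1, Or.inr rfl, by linear_combination -h, ?_⟩
      have h3 : c (a + b) * (l a + l b) * (l a + l b) =
          (c a * l a + (-1) * K * l b) * (l a + l b) := by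
        linear_combination -h1 - l b * h
      exact mul_right_cancel₀ hxy h3
    · refine ⟨1, Or.inl rfl, by linear_combination -h, ?_⟩
      have h3 : c (a + b) * (l a + l b) * (l a + l b) =
          (c a * l a + 1 * K * l b) * (l a + l b) := by
        linear_combination -h1 - l b * h
      exact mul_right_cancel₀ hxy h3
  · rintro ⟨ε, hε, e1, e2⟩
    have hε2 : ε ^ 2 = 1 := by rcases hε with rfl | rfl <;> ring
    constructor
    · linear_combination l b * e1 - (l a + l b) * e2
    · have h4 : c (a + b) * (c a + c b) * (l b * (l a + l b)) =
          (c a * c b + K ^ 2) * (l b * (l a + l b)) := by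
        linear_combination (c a + c b) * l b * e2 + (ε * K * l b - c a * l b) * e1 +
          K ^ 2 * (l a + l b) * l b * hε2
      have hyt : l b * (l a + l b) ≠ 0 := mul_ne_zero hy hxy
      exact mul_right_cancel₀ hyt h4
end

section
/- Let ᾱ, β̄, γ̄ be an admissible triple of positive quasiroots (i.e. ᾱ+β̄, β̄+γ̄, and ᾱ+β̄+γ̄ are quasiroots), K ≠ 0, λ additive and nonvanishing on quasiroots, and c a function satisfying, for every admissible pair, equations (with some sign for each pair): c(ρ̄)λ(ρ̄) = c(σ̄)λ(σ̄) ± Kλ(σ̄+ρ̄) and c(σ̄+ρ̄)λ(σ̄+ρ̄) = c(σ̄)λ(σ̄) ± Kλ(ρ̄). If c(ᾱ+β̄)λ(ᾱ+β̄) = c(ᾱ)λ(ᾱ) + Kλ(β̄) holds with sign +, then c(β̄+γ̄)λ(β̄+γ̄) = c(β̄)λ(β̄) + Kλ(γ̄) also holds with sign +; i.e. the sign is the same for the pairs (ᾱ,β̄) and (β̄,γ̄). -/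
/-- **sign-consistency, Lemma 3.1.** Let `(a, b, g)` be an admissible
triple of positive quasiroots, `K ≠ 0`, `l` additive on admissible pairs and
nonvanishing on quasiroots, and suppose `c` satisfies, for every admissible pair
`(σ, ρ)` and some sign `ε = ε(σ,ρ) ∈ {±1}`, the equations
`c(ρ)l(ρ) = c(σ)l(σ) + εK l(σ+ρ)` and `c(σ+ρ)l(σ+ρ) = c(σ)l(σ) + εK l(ρ)`.
If `c(a+b)l(a+b) = c(a)l(a) + K l(b)` holds with sign `+`, then also
`c(b+g)l(b+g) = c(b)l(b) + K l(g)` holds with sign `+`. -/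
theorem stmt7
    {V : Type*} [AddCommGroup V]
    (Q : Set V) (l c : V → ℂ) (K : ℂ) (hK : K ≠ 0)
    (hadd : ∀ x ∈ Q, ∀ y ∈ Q, x + y ∈ Q → l (x + y) = l x + l y)
    (hlne : ∀ q ∈ Q, l q ≠ 0)
    (hsys : ∀ x ∈ Q, ∀ y ∈ Q, x + y ∈ Q → ∃ ε : ℂ, (ε = 1 ∨ ε = -1) ∧
      c y * l y = c x * l x + ε * K * l (x + y) ∧
      c (x + y) * l (x + y) = c x * l x + ε * K * l y)
    (a b g : V) (ha : a ∈ Q) (hb : b ∈ Q) (hg : g ∈ Q)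
    (hab : a + b ∈ Q) (hbg : b + g ∈ Q) (habg : a + b + g ∈ Q)
    (hgiven : c (a + b) * l (a + b) = c a * l a + K * l b) :
    c (b + g) * l (b + g) = c b * l b + K * l g := by
  obtain ⟨ε1, hε1, e1a, e1b⟩ := hsys a ha b hb hab
  obtain ⟨ε2, hε2, e2a, e2b⟩ := hsys b hb g hg hbg
  obtain ⟨ε3, hε3, e3a, e3b⟩ := hsys (a + b) hab g hg habg
  have lab : l (a + b) = l a + l b := hadd a ha b hb hab
  have lbg : l (b + g) = l b + l g := hadd b hb g hg hbg
  have labg : l (a + b + g) = l a + l b + l g := by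
    rw [hadd (a + b) hab g hg habg, lab]
  have hla : l a ≠ 0 := hlne a ha
  have hlb : l b ≠ 0 := hlne b hb
  have hlbg : l b + l g ≠ 0 := lbg ▸ hlne (b + g) hbg
  -- first, ε1 = 1
  have hε1' : ε1 = 1 := by
    rcases hε1 with h | h
    · exact h
    · subst h
      exfalso
      have hz : K * l b = 0 := by linear_combination (e1b - hgiven) / 2
      rcases mul_eq_zero.mp hz with h | h
      · exact hK h
      · exact hlb h
  subst hε1'
  rcases hε2 with h2 | h2
  · subst h2; linear_combination e2b
  · exfalso
    subst h2
    rcases hε3 with h3 | h3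
    · subst h3
      have hz : K * (l b + l g) = 0 := by
        linear_combination (e1a - e1b + e2a - e3a - K * lbg + K * lab - K * labg) / 2
      rcases mul_eq_zero.mp hz with h | h
      · exact hK h
      · exact hlbg h
    · subst h3
      have hz : K * l a = 0 := by
        linear_combination (e1b - e1a - e2a + e3a + K * lbg - K * lab - K * labg) / 2
      rcases mul_eq_zero.mp hz with h | h
      · exact hK h
      · exact hla h
end

section
/- Let β̄ be a positive quasiroot such that the pair (β̄, β̄) is admissible (2β̄ is a quasiroot), K ≠ 0, λ additive and nonvanishing on quasiroots, and c a function satisfying c(β̄)λ(β̄) = c(β̄)λ(β̄) ± 2Kλ(β̄) type equations derived from the system c(ρ̄)λ(ρ̄) = c(σ̄)λ(σ̄) ± Kλ(σ̄+ρ̄). Then no such c exists; i.e. if any quasiroot β̄ has 2β̄ also a quasiroot, the system { [[f,f]] = K²φ, [[f,v_λ]] = 0 } with K ≠ 0 has no solution. -/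
/-- If some quasiroot `b` has `2b` also a quasiroot, `l` is additive
on admissible pairs and nonvanishing on quasiroots, and `K ≠ 0`, then there is no `c`
satisfying the system `c(ρ)l(ρ) = c(σ)l(σ) + εK l(σ+ρ)`,
`c(σ+ρ)l(σ+ρ) = c(σ)l(σ) + εK l(ρ)` (with some sign `ε = ±1` for each admissible
pair): applying it to `σ = ρ = b` forces `l(2b) = 0`, a contradiction. -/
theorem stmt9
    {V : Type*} [AddCommGroup V]
    (Q : Set V) (l : V → ℂ) (K : ℂ) (hK : K ≠ 0)
    (hadd : ∀ x ∈ Q, ∀ y ∈ Q, x + y ∈ Q → l (x + y) = l x + l y)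
    (hlne : ∀ q ∈ Q, l q ≠ 0)
    (b : V) (hb : b ∈ Q) (h2b : b + b ∈ Q) :
    ¬ ∃ c : V → ℂ, ∀ x ∈ Q, ∀ y ∈ Q, x + y ∈ Q → ∃ ε : ℂ, (ε = 1 ∨ ε = -1) ∧
      c y * l y = c x * l x + ε * K * l (x + y) ∧
      c (x + y) * l (x + y) = c x * l x + ε * K * l y := by
  rintro ⟨c, hc⟩
  obtain ⟨ε, hε, h1, h2⟩ := hc b hb b hb h2b
  have : ε * K * l (b + b) = 0 := by linear_combination -h1
  have hεK : ε * K ≠ 0 := by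
    rcases hε with h | h <;> simp [h, hK]
  rcases mul_eq_zero.mp this with h | h
  · exact hεK h
  · exact hlne _ h2b h
end

section
/- Let g = sl(n+1) (type A_n) with simple roots α₁,…,α_n, and let Γ ⊆ Π. Then the set of quasiroots Ω̄_Γ (nonzero projections of roots modulo span Γ) is isomorphic, as a subset of a vector space closed under the induced addition structure, to the root system of type A_k where k = |Π \ Γ|: the positive quasiroots are exactly the sums β̄_i + β̄_{i+1} + ⋯ + β̄_j (i ≤ j) of consecutive simple quasiroots, each occurring once. -/
open Finset

/-- For `g = sl(n+1)` (type `A_n`) with simple roots `α₁, …, α_n`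
(positive roots being the consecutive sums `α_i + ⋯ + α_j`, `i ≤ j`) and `Γ ⊆ Π`,
the set of positive quasiroots (nonzero projections of positive roots modulo
`span Γ`) is exactly the set of sums `β̄_a + ⋯ + β̄_b` (`a ≤ b`) of consecutive simple
quasiroots `β̄₁, …, β̄_k` (the images of `Π \ Γ` in their natural order, with
`k = |Π \ Γ|`), each occurring exactly once; i.e. `Ω̄_Γ` is a root system of
type `A_k`. -/
theorem stmt10
    {V : Type*} [AddCommGroup V] [Module ℂ V] {n k : ℕ}
    (α : Fin n → V) (hα : LinearIndependent ℂ α)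
    (Γ : Finset (Fin n))
    (S : Submodule ℂ V) (hS : S = Submodule.span ℂ (α '' (↑Γ : Set (Fin n))))
    (hk : k = Γᶜ.card)
    (e : Fin k ≃o {i : Fin n // i ∈ Γᶜ}) :
    ({x : V ⧸ S | x ≠ 0 ∧ ∃ a b : Fin n, a ≤ b ∧
        (Submodule.Quotient.mk (∑ i ∈ Finset.Icc a b, α i) : V ⧸ S) = x}
      = {x : V ⧸ S | ∃ a b : Fin k, a ≤ b ∧
          x = ∑ j ∈ Finset.Icc a b, (Submodule.Quotient.mk (α (e j).1) : V ⧸ S)})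
    ∧ ∀ a b a' b' : Fin k, a ≤ b → a' ≤ b' →
        (∑ j ∈ Finset.Icc a b, (Submodule.Quotient.mk (α (e j).1) : V ⧸ S))
          = ∑ j ∈ Finset.Icc a' b', (Submodule.Quotient.mk (α (e j).1) : V ⧸ S) →
        a = a' ∧ b = b' := by
  subst hS
  set S := Submodule.span ℂ (α '' (↑Γ : Set (Fin n))) with hS
  set β : Fin k → V ⧸ S := fun j => (Submodule.Quotient.mk (α (e j).1) : V ⧸ S) with hβ
  -- β is linearly independent
  have hinj0 : Function.Injective (fun j : Fin k => (e j).1) := by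
    intro i j h
    exact e.injective (Subtype.ext h)
  have h1 : LinearIndependent ℂ (fun j : Fin k => α (e j).1) := hα.comp _ hinj0
  have hrange : Set.range (fun j : Fin k => (e j).1) = (↑(Γᶜ) : Set (Fin n)) := by
    ext i
    constructor
    · rintro ⟨j, rfl⟩; exact (e j).2
    · intro hi; exact ⟨e.symm ⟨i, hi⟩, by simp⟩
  have hβind : LinearIndependent ℂ β := by
    have hdisj : Disjoint (Submodule.span ℂ (Set.range (fun j : Fin k => α (e j).1))) S := by
      rw [show (fun j : Fin k => α (e j).1) = α ∘ (fun j => (e j).1) from rfl,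
        Set.range_comp, hrange]
      refine hα.disjoint_span_image ?_
      rw [Finset.coe_compl]
      exact disjoint_compl_left
    have := h1.map (f := S.mkQ) (by rw [Submodule.ker_mkQ]; exact hdisj)
    exact this
  have hmono : ∀ {i j : Fin k}, i ≤ j → (e i).1 ≤ (e j).1 := by
    intro i j h
    exact Subtype.coe_le_coe.mpr (e.monotone h)
  have hzero : ∀ i ∈ Γ, (Submodule.Quotient.mk (α i) : V ⧸ S) = 0 := by
    intro i hi
    rw [Submodule.Quotient.mk_eq_zero]
    exact Submodule.subset_span ⟨i, hi, rfl⟩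
  -- key reindexing lemma
  have hsum : ∀ a b : Fin n, (Submodule.Quotient.mk (∑ i ∈ Finset.Icc a b, α i) : V ⧸ S)
      = ∑ j ∈ univ.filter (fun j => (e j).1 ∈ Finset.Icc a b), β j := by
    intro a b
    have l1 : (Submodule.Quotient.mk (∑ i ∈ Finset.Icc a b, α i) : V ⧸ S)
        = ∑ i ∈ Finset.Icc a b, (Submodule.Quotient.mk (α i) : V ⧸ S) := by
      rw [← Submodule.mkQ_apply, map_sum]; rfl
    have l3 : ∑ j : Fin k, (if (e j).1 ∈ Finset.Icc a b then β j else 0)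
        = ∑ u : {i : Fin n // i ∈ Γᶜ}, (if u.1 ∈ Finset.Icc a b then
            (Submodule.Quotient.mk (α u.1) : V ⧸ S) else 0) :=
      Fintype.sum_equiv e.toEquiv _ _ (fun j => rfl)
    calc (Submodule.Quotient.mk (∑ i ∈ Finset.Icc a b, α i) : V ⧸ S)
        = ∑ i ∈ Finset.Icc a b, (Submodule.Quotient.mk (α i) : V ⧸ S) := l1
      _ = ∑ i ∈ (Finset.Icc a b).filter (· ∈ Γᶜ),
            (Submodule.Quotient.mk (α i) : V ⧸ S) :=
          (Finset.sum_filter_of_ne (by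
            intro i hi hne
            rw [Finset.mem_compl]
            intro hmem
            exact hne (hzero i hmem))).symm
      _ = ∑ i ∈ Γᶜ.filter (· ∈ Finset.Icc a b),
            (Submodule.Quotient.mk (α i) : V ⧸ S) := by
          congr 1
          ext i
          simp [Finset.mem_filter, and_comm]
      _ = ∑ i ∈ Γᶜ, (if i ∈ Finset.Icc a b then
            (Submodule.Quotient.mk (α i) : V ⧸ S) else 0) := Finset.sum_filter _ _
      _ = ∑ u : {i : Fin n // i ∈ Γᶜ}, (if u.1 ∈ Finset.Icc a b then
            (Submodule.Quotient.mk (α u.1) : V ⧸ S) else 0) :=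
          (Finset.sum_coe_sort (Γᶜ) _).symm
      _ = ∑ j : Fin k, (if (e j).1 ∈ Finset.Icc a b then β j else 0) := l3.symm
      _ = ∑ j ∈ univ.filter (fun j => (e j).1 ∈ Finset.Icc a b), β j :=
          (Finset.sum_filter _ _).symm
  have hind : ∀ s : Finset (Fin k),
      ∑ j : Fin k, (if j ∈ s then (1:ℂ) else 0) • β j = ∑ j ∈ s, β j := by
    intro s
    simp only [ite_smul, one_smul, zero_smul]
    rw [← Finset.sum_filter, Finset.filter_mem_eq_inter, Finset.univ_inter]
  have hnonzero : ∀ s : Finset (Fin k), s.Nonempty → ∑ j ∈ s, β j ≠ 0 := by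
    intro s hs h0
    obtain ⟨j0, hj0⟩ := hs
    have := Fintype.linearIndependent_iff.mp hβind
      (fun j => if j ∈ s then (1 : ℂ) else 0)
      (by rw [hind s]; exact h0) j0
    simp [hj0] at this
  have hcoeff : ∀ s t : Finset (Fin k), ∑ j ∈ s, β j = ∑ j ∈ t, β j → s = t := by
    intro s t h
    have key := Fintype.linearIndependent_iff.mp hβind
      (fun j => (if j ∈ s then (1 : ℂ) else 0) - (if j ∈ t then (1 : ℂ) else 0))
      (by
        have l : ∑ j, ((if j ∈ s then (1:ℂ) else 0) - (if j ∈ t then (1:ℂ) else 0)) • β j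
            = ∑ j ∈ s, β j - ∑ j ∈ t, β j := by
          simp only [sub_smul]
          rw [Finset.sum_sub_distrib, hind s, hind t]
        rw [l, h, sub_self])
    ext j
    have := key j
    by_cases hjs : j ∈ s <;> by_cases hjt : j ∈ t <;> simp [hjs, hjt] at this ⊢
  constructor
  · ext x
    simp only [Set.mem_setOf_eq]
    constructor
    · rintro ⟨hx, a, b, hab, rfl⟩
      rw [hsum a b]
      set T : Finset (Fin k) := univ.filter (fun j => (e j).1 ∈ Finset.Icc a b) with hT
      have hTne : T.Nonempty := by
        rw [Finset.nonempty_iff_ne_empty]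
        intro hemp
        exact hx (by rw [hsum a b, ← hT, hemp, Finset.sum_empty])
      refine ⟨T.min' hTne, T.max' hTne, Finset.min'_le _ _ (T.max'_mem hTne), ?_⟩
      congr 1
      ext j
      constructor
      · intro hj
        exact Finset.mem_Icc.mpr ⟨Finset.min'_le _ _ hj, Finset.le_max' _ _ hj⟩
      · intro hj
        rw [Finset.mem_Icc] at hj
        have hmin := (Finset.mem_filter.mp (T.min'_mem hTne)).2
        have hmax := (Finset.mem_filter.mp (T.max'_mem hTne)).2
        rw [Finset.mem_Icc] at hmin hmax
        exact Finset.mem_filter.mpr ⟨Finset.mem_univ _, Finset.mem_Icc.mpr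
          ⟨le_trans hmin.1 (hmono hj.1), le_trans (hmono hj.2) hmax.2⟩⟩
    · rintro ⟨a, b, hab, rfl⟩
      refine ⟨hnonzero _ (Finset.nonempty_Icc.mpr hab), (e a).1, (e b).1, hmono hab, ?_⟩
      rw [hsum (e a).1 (e b).1]
      congr 1
      ext j
      simp only [Finset.mem_filter, Finset.mem_univ, true_and, Finset.mem_Icc]
      constructor
      · rintro ⟨h1', h2'⟩
        exact ⟨e.le_iff_le.mp (Subtype.coe_le_coe.mp h1'),
          e.le_iff_le.mp (Subtype.coe_le_coe.mp h2')⟩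
      · rintro ⟨h1', h2'⟩
        exact ⟨hmono h1', hmono h2'⟩
  · intro a b a' b' hab hab' heq
    have := hcoeff _ _ heq
    have ha : a ∈ Finset.Icc a' b' := by
      rw [← this]; exact Finset.mem_Icc.mpr ⟨le_refl a, hab⟩
    have ha' : a' ∈ Finset.Icc a b := by
      rw [this]; exact Finset.mem_Icc.mpr ⟨le_refl a', hab'⟩
    have hb : b ∈ Finset.Icc a' b' := by
      rw [← this]; exact Finset.mem_Icc.mpr ⟨hab, le_refl b⟩
    have hb' : b' ∈ Finset.Icc a b := by
      rw [this]; exact Finset.mem_Icc.mpr ⟨hab', le_refl b'⟩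
    rw [Finset.mem_Icc] at ha ha' hb hb'
    exact ⟨le_antisymm ha'.1 ha.1, le_antisymm hb.2 hb'.2⟩
end

section
/- In type B_n or C_n with simple roots α₁,…,α_n (maximal root α₁ + 2α₂ + ⋯ + 2α_n), if Γ ⊆ Π does not contain some α_i with i > 1 (equivalently Π \ Γ ⊄ {α₁}), then there exists a positive quasiroot β̄ such that 2β̄ is also a quasiroot, or there exists an admissible triple (β̄, ᾱ, β̄) of quasiroots; consequently no invariant bracket f with [[f,f]] = K²φ_M (K ≠ 0) compatible with a KKS bracket exists, and the only good semisimple orbits in types B_n and C_n are those with Π \ Γ = {α₁}, which are symmetric spaces. -/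
open Finset

/-- In type `B_n` or `C_n` with simple roots `α₀, α₁, …, α_{n-1}`
(paper's `α₁, …, α_n`; the maximal root is `α₀ + 2α₁ + ⋯ + 2α_{n-1}`, and
`β = α₁ + ⋯ + α_{n-1}` is a root, as are `β + α₀` and `(β + α₀) + β`), if `Γ` misses
some simple root `α_i` with `i ≠ 0` then either there is a positive quasiroot `q`
with `2q` also a quasiroot, or there is an admissible triple `(q, a, q)` of
quasiroots; consequently there is no solution `c` of the system
`c(ρ)l(ρ) = c(σ)l(σ) ± K l(σ+ρ)`, `c(σ+ρ)l(σ+ρ) = c(σ)l(σ) ± K l(ρ)` with `K ≠ 0`,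
i.e. no invariant bracket `f` with `[[f,f]] = K²φ_M` compatible with a KKS bracket:
the only good orbits here have `Π \ Γ = {α₀}` (the symmetric spaces). -/
theorem stmt11
    {V : Type*} [AddCommGroup V] [Module ℂ V] {n : ℕ}
    (α : Fin (n + 1) → V) (hα : LinearIndependent ℂ α)
    (Ω P : Set V) (hPΩ : P ⊆ Ω)
    (hαP : ∀ i, α i ∈ P)
    (β : V) (hβdef : β = ∑ i ∈ Finset.univ.filter (fun i : Fin (n + 1) => i ≠ 0), α i)
    (hβ : β ∈ P) (hβ1 : β + α 0 ∈ P) (hmax : β + α 0 + β ∈ P)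
    (Γ : Set (Fin (n + 1))) (hΓ : ∃ i : Fin (n + 1), i ≠ 0 ∧ i ∉ Γ)
    (S : Submodule ℂ V) (hS : S = Submodule.span ℂ (α '' Γ))
    (Q : Set (V ⧸ S))
    (hQ : Q = {x : V ⧸ S | x ≠ 0 ∧ ∃ ρ ∈ P, (Submodule.Quotient.mk ρ : V ⧸ S) = x}) :
    ((∃ q ∈ Q, q + q ∈ Q) ∨
      ∃ q ∈ Q, ∃ a ∈ Q, q + a ∈ Q ∧ q + a + q ∈ Q) ∧
    ∀ K : ℂ, K ≠ 0 →
      ∀ l : V ⧸ S → ℂ,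
        (∀ x ∈ Q, ∀ y ∈ Q, x + y ∈ Q → l (x + y) = l x + l y) →
        (∀ q ∈ Q, l q ≠ 0) →
        ¬ ∃ c : V ⧸ S → ℂ, ∀ x ∈ Q, ∀ y ∈ Q, x + y ∈ Q →
            ∃ ε : ℂ, (ε = 1 ∨ ε = -1) ∧
              c y * l y = c x * l x + ε * K * l (x + y) ∧
              c (x + y) * l (x + y) = c x * l x + ε * K * l y := by
  classical
  obtain ⟨i, hi0, hiΓ⟩ := hΓ
  -- Build a linear functional `g` with `g (α j) = δ_{j i}`.
  have hmemp : ∀ j, α j ∈ Submodule.span ℂ (Set.range α) :=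
    fun j => Submodule.subset_span ⟨j, rfl⟩
  set f0 : Submodule.span ℂ (Set.range α) →ₗ[ℂ] ℂ :=
    (Finsupp.lapply i).comp hα.repr with hf0
  obtain ⟨g, hg⟩ := LinearMap.exists_extend f0
  have hgα : ∀ j, g (α j) = if j = i then 1 else 0 := by
    intro j
    have h1 : g (α j) = f0 ⟨α j, hmemp j⟩ := (LinearMap.congr_fun hg ⟨α j, hmemp j⟩)
    rw [h1, hf0]
    simp only [LinearMap.comp_apply, Finsupp.lapply_apply]
    rw [hα.repr_eq_single j ⟨α j, hmemp j⟩ rfl]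
    simp [Finsupp.single_apply]
  have hker : ∀ x ∈ S, g x = 0 := by
    intro x hx
    rw [hS] at hx
    have hle : Submodule.span ℂ (α '' Γ) ≤ LinearMap.ker g := by
      rw [Submodule.span_le]
      rintro _ ⟨j, hj, rfl⟩
      have hji : j ≠ i := fun h => hiΓ (h ▸ hj)
      simp [LinearMap.mem_ker, hgα, hji]
    exact hle hx
  have hgβ : g β = 1 := by
    rw [hβdef, map_sum]
    simp only [hgα]
    rw [Finset.sum_ite_eq' (Finset.univ.filter (fun i : Fin (n + 1) => i ≠ 0)) i
      (fun _ => (1 : ℂ))]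
    simp [hi0]
  have hgα0 : g (α 0) = 0 := by
    rw [hgα]
    exact if_neg (Ne.symm hi0)
  -- membership criterion for Q
  have hQmem : ∀ v ∈ P, g v ≠ 0 → (Submodule.Quotient.mk v : V ⧸ S) ∈ Q := by
    intro v hv hgv
    rw [hQ]
    refine ⟨fun h => hgv (hker v ((Submodule.Quotient.mk_eq_zero S).mp h)), v, hv, rfl⟩
  have hgβ1 : g (β + α 0) = 1 := by rw [map_add, hgβ, hgα0]; ring
  have hgmax : g (β + α 0 + β) = 2 := by rw [map_add, hgβ1, hgβ]; ring
  -- Part 1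
  have part1 : (∃ q ∈ Q, q + q ∈ Q) ∨
      ∃ q ∈ Q, ∃ a ∈ Q, q + a ∈ Q ∧ q + a + q ∈ Q := by
    by_cases h0 : (Submodule.Quotient.mk (α 0) : V ⧸ S) = 0
    · left
      refine ⟨Submodule.Quotient.mk β, hQmem β hβ (by simp [hgβ]), ?_⟩
      have heq : (Submodule.Quotient.mk β : V ⧸ S) + Submodule.Quotient.mk β
          = Submodule.Quotient.mk (β + α 0 + β) := by
        rw [Submodule.Quotient.mk_add, Submodule.Quotient.mk_add, h0]
        abel
      rw [heq]
      exact hQmem _ hmax (by rw [hgmax]; norm_num)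
    · right
      refine ⟨Submodule.Quotient.mk β, hQmem β hβ (by simp [hgβ]),
        Submodule.Quotient.mk (α 0), ?_, ?_, ?_⟩
      · rw [hQ]; exact ⟨h0, α 0, hαP 0, rfl⟩
      · rw [← Submodule.Quotient.mk_add]
        exact hQmem _ hβ1 (by rw [hgβ1]; norm_num)
      · rw [← Submodule.Quotient.mk_add, ← Submodule.Quotient.mk_add]
        exact hQmem _ hmax (by rw [hgmax]; norm_num)
  refine ⟨part1, ?_⟩
  -- Part 2
  rintro K hK l hladd hlne ⟨c, hc⟩
  have h2K : (2 : ℂ) * K ≠ 0 := mul_ne_zero two_ne_zero hK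
  rcases part1 with ⟨q, hq, hqq⟩ | ⟨q, hq, a, ha, hqa, hqaq⟩
  · obtain ⟨ε, hε, h1, _⟩ := hc q hq q hq hqq
    have hεne : ε ≠ 0 := by rcases hε with rfl | rfl <;> norm_num
    have h3 : ε * K * l (q + q) = 0 := left_eq_add.mp h1
    exact (mul_ne_zero (mul_ne_zero hεne hK) (hlne _ hqq)) h3
  · obtain ⟨ε1, hε1, h11, h12⟩ := hc q hq a ha hqa
    obtain ⟨ε2, hε2, h21, h22⟩ := hc (q + a) hqa q hq hqaq
    have key : ε1 * K * l a + ε2 * K * l (q + a + q) = 0 := by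
      linear_combination -h12 - h21
    have hla : l (q + a) = l q + l a := hladd q hq a ha hqa
    have hlaq : l (q + a + q) = l (q + a) + l q := hladd (q + a) hqa q hq hqaq
    have hlq := hlne q hq
    have hlqa := hlne _ hqa
    rw [hlaq, hla] at key
    rw [hla] at hlqa
    rcases hε1 with rfl | rfl <;> rcases hε2 with rfl | rfl
    · exact hlqa ((mul_eq_zero.mp
        (show (2 * K) * (l q + l a) = 0 by linear_combination key)).resolve_left h2K)
    · exact hlq ((mul_eq_zero.mp
        (show (2 * K) * l q = 0 by linear_combination -key)).resolve_left h2K)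
    · exact hlq ((mul_eq_zero.mp
        (show (2 * K) * l q = 0 by linear_combination key)).resolve_left h2K)
    · exact hlqa ((mul_eq_zero.mp
        (show (2 * K) * (l q + l a) = 0 by linear_combination -key)).resolve_left h2K)
end

section
/- Let v_λ = ∑_{α∈Ω⁺\Ω_Γ} (1/λ(ᾱ)) E_α ∧ E_{−α} (the KKS bivector) and w = ∑_{α∈Ω⁺\Ω_Γ} λ(ᾱ) E_α ∧ E_{−α}, where λ is a linear functional nonvanishing on quasiroots. Then the Schouten bracket satisfies [[v_λ, w]] = −3 φ_M, where φ_M is the invariant three-vector normalized so that the coefficient of E_{α+β} ∧ E_{−α} ∧ E_{−β} for positive roots α, β, α+β is N_{α,β}. -/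
open Finset

/-- Let `v_λ = ∑_{α ∈ Ω⁺\Ω_Γ} (1/λ(ᾱ)) E_α ∧ E_{-α}` (the KKS
bivector) and `w = ∑_{α ∈ Ω⁺\Ω_Γ} λ(ᾱ) E_α ∧ E_{-α}`, where `λ` is a linear
functional on `h*/h*_Γ` nonvanishing on quasiroots.  Then `[[v_λ, w]] = -3 φ_M`,
where `φ_M` is normalized so that its coefficient on `E_{α+β} ∧ E_{-α} ∧ E_{-β}`
(for positive roots `α, β, α+β`) is `N_{α,β}`; the coefficient of `[[v_λ, w]]` is
extracted, as in Proposition 3.3, by pairing with an alternating 3-form `D`. -/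
theorem stmt18
    {V : Type*} [AddCommGroup V] [Module ℂ V]
    {L : Type*} [LieRing L] [LieAlgebra ℂ L]
    (Ω : Set V) (hneg : ∀ ρ ∈ Ω, -ρ ∈ Ω) (h0 : (0 : V) ∉ Ω)
    (Γ : Set V) (S : Submodule ℂ V) (hSdef : S = Submodule.span ℂ Γ)
    (Pm : Finset V)
    (hPm : ∀ p ∈ Pm, p ∈ Ω ∧ p ∉ S)
    (hP2 : ∀ p ∈ Pm, ∀ q ∈ Pm, p + q ≠ 0)
    (hP3 : ∀ p ∈ Pm, ∀ q ∈ Pm, ∀ s ∈ Pm, p + q + s ≠ 0)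
    (E : V → L) (N : V → V → ℂ) (H : Submodule ℂ L)
    (hbracket : ∀ a ∈ Ω, ∀ b ∈ Ω, a + b ∈ Ω → ⁅E a, E b⁆ = N a b • E (a + b))
    (hbracket0 : ∀ a ∈ Ω, ∀ b ∈ Ω, a + b ∉ Ω → a + b ≠ 0 → ⁅E a, E b⁆ = 0)
    (hbracketH : ∀ a ∈ Ω, ⁅E a, E (-a)⁆ ∈ H)
    (hcyc : ∀ a ∈ Ω, ∀ b ∈ Ω, ∀ g ∈ Ω, a + b + g = 0 → N a b = N b g)
    -- the linear functional λ on h*/h*_Γ, nonvanishing on quasiroots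
    (lf : (V ⧸ S) →ₗ[ℂ] ℂ)
    (hlf : ∀ ρ ∈ Ω, ρ ∉ S → lf (Submodule.Quotient.mk ρ) ≠ 0)
    (α β : V) (hα : α ∈ Pm) (hβ : β ∈ Pm) (hαβ : α + β ∈ Pm)
    (D : AlternatingMap ℂ L ℂ (Fin 3))
    (hD1 : D ![E (α + β), E (-α), E (-β)] = 1)
    (hD0 : ∀ a ∈ Ω, ∀ b ∈ Ω, ∀ g ∈ Ω,
      ({a, b, g} : Multiset V) ≠ ({α + β, -α, -β} : Multiset V) →
      D ![E a, E b, E g] = 0)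
    (hDH : ∀ x ∈ H, ∀ y z : L, D ![x, y, z] = 0) :
    (∑ a ∈ Pm, ∑ b ∈ Pm,
        (1 / lf (Submodule.Quotient.mk a)) * lf (Submodule.Quotient.mk b) *
        (D ![⁅E a, E b⁆, E (-a), E (-b)] - D ![⁅E a, E (-b)⁆, E (-a), E b]
          - D ![⁅E (-a), E b⁆, E a, E (-b)] + D ![⁅E (-a), E (-b)⁆, E a, E b]))
      = -3 * N α β := by
  classical
  have hΩm : ∀ p ∈ Pm, p ∈ Ω := fun p hp => (hPm p hp).1
  have hαΩ := hΩm α hα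
  have hβΩ := hΩm β hβ
  have hαβΩ := hΩm _ hαβ
  have notneg : ∀ p ∈ Pm, ∀ q ∈ Pm, p ≠ -q := by
    intro p hp q hq h
    exact hP2 p hp q hq (by rw [h, neg_add_cancel])
  have negcase : ∀ p ∈ Pm, ∀ q ∈ Pm, -p ≠ q := by
    intro p hp q hq h
    exact hP2 q hq p hp (by rw [← h, neg_add_cancel])
  have hαββ : α + β ≠ β := by
    intro h
    exact h0 (by simpa [add_eq_right.mp h] using hαΩ)
  have hαβα : α + β ≠ α := by
    intro h
    exact h0 (by simpa [add_eq_left.mp h] using hβΩ)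
  have hαβne : α ≠ β := by
    intro h
    have h2 : D ![E (α + β), E (-α), E (-β)] = 0 :=
      D.map_eq_zero_of_eq _
        (by rw [show ((![E (α + β), E (-α), E (-β)] : Fin 3 → L) 1) = E (-α) from rfl,
          show ((![E (α + β), E (-α), E (-β)] : Fin 3 → L) 2) = E (-β) from rfl, h])
        (by decide : (1 : Fin 3) ≠ 2)
    rw [hD1] at h2
    exact one_ne_zero h2
  have Dz : ∀ y z : L, D ![(0 : L), y, z] = 0 := fun y z => by
    rw [← D.curryLeft_apply_apply, map_zero, AlternatingMap.zero_apply]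
  have Dsmul : ∀ (c : ℂ) (v y z : L), D ![c • v, y, z] = c * D ![v, y, z] := fun c v y z => by
    rw [← D.curryLeft_apply_apply, map_smul, AlternatingMap.smul_apply,
      D.curryLeft_apply_apply, smul_eq_mul]
  have Dnegsmul : ∀ (c : ℂ) (v y z : L), D ![-(c • v), y, z] = -(c * D ![v, y, z]) :=
    fun c v y z => by
      rw [← D.curryLeft_apply_apply, map_neg, AlternatingMap.neg_apply,
        D.curryLeft_apply_apply, Dsmul]
  have swap12 : ∀ u v w : L, D ![u, w, v] = -D ![u, v, w] := fun u v w => by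
    have h : ![u, w, v] = ![u, v, w] ∘ Equiv.swap (1 : Fin 3) 2 := by
      funext i; fin_cases i <;> simp [Equiv.swap_apply_def]
    rw [h, D.map_swap _ (by decide : (1 : Fin 3) ≠ 2)]
  have swap01 : ∀ u v w : L, D ![v, u, w] = -D ![u, v, w] := fun u v w => by
    have h : ![v, u, w] = ![u, v, w] ∘ Equiv.swap (0 : Fin 3) 1 := by
      funext i; fin_cases i <;> simp [Equiv.swap_apply_def]
    rw [h, D.map_swap _ (by decide : (0 : Fin 3) ≠ 1)]
  have swap02 : ∀ u v w : L, D ![w, v, u] = -D ![u, v, w] := fun u v w => by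
    have h : ![w, v, u] = ![u, v, w] ∘ Equiv.swap (0 : Fin 3) 2 := by
      funext i; fin_cases i <;> simp [Equiv.swap_apply_def]
    rw [h, D.map_swap _ (by decide : (0 : Fin 3) ≠ 2)]
  have A2 : D ![E (-β), E (-α), E (α + β)] = -1 := by rw [swap02, hD1]
  have A3 : D ![E (-α), E (-β), E (α + β)] = 1 := by rw [swap01, A2]; ring
  have A4 : D ![E (-β), E (α + β), E (-α)] = 1 := by rw [swap12, A2]; ring
  have A5 : D ![E (-α), E (α + β), E (-β)] = -1 := by rw [swap01, hD1]
  have A6 : D ![E (α + β), E (-β), E (-α)] = -1 := by rw [swap12, hD1]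
  have msub : ∀ p q r : V, ({p, q, r} : Multiset V) = ({α + β, -α, -β} : Multiset V) →
      (p = α + β ∨ p = -α ∨ p = -β) ∧ (q = α + β ∨ q = -α ∨ q = -β) ∧
      (r = α + β ∨ r = -α ∨ r = -β) ∧
      (-α = p ∨ -α = q ∨ -α = r) ∧ (-β = p ∨ -β = q ∨ -β = r) := by
    intro p q r h
    refine ⟨?_, ?_, ?_, ?_, ?_⟩
    · have : p ∈ ({α + β, -α, -β} : Multiset V) := by rw [← h]; simp
      simpa using this
    · have : q ∈ ({α + β, -α, -β} : Multiset V) := by rw [← h]; simp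
      simpa using this
    · have : r ∈ ({α + β, -α, -β} : Multiset V) := by rw [← h]; simp
      simpa using this
    · have : -α ∈ ({p, q, r} : Multiset V) := by rw [h]; simp
      simpa using this
    · have : -β ∈ ({p, q, r} : Multiset V) := by rw [h]; simp
      simpa using this
  have Z1 : ∀ a ∈ Pm, ∀ b ∈ Pm, ¬(a = α ∧ b = β) → ¬(a = β ∧ b = α) →
      D ![⁅E a, E b⁆, E (-a), E (-b)] = 0 := by
    intro a ha b hb hx1 hx2
    have haΩ := hΩm a ha
    have hbΩ := hΩm b hb
    by_cases hm : a + b ∈ Ω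
    · rw [hbracket _ haΩ _ hbΩ hm, Dsmul, hD0 _ hm _ (hneg a haΩ) _ (hneg b hbΩ) ?eq, mul_zero]
      case eq =>
        intro heq
        obtain ⟨hm1, hm2, hm3, -, -⟩ := msub _ _ _ heq
        have ha' : a = α ∨ a = β := by
          rcases hm2 with h | h | h
          · exact absurd h (by intro h'; exact negcase a ha (α + β) hαβ h')
          · exact Or.inl (neg_injective h)
          · exact Or.inr (neg_injective h)
        have hb' : b = α ∨ b = β := by
          rcases hm3 with h | h | h
          · exact absurd h (by intro h'; exact negcase b hb (α + β) hαβ h')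
          · exact Or.inl (neg_injective h)
          · exact Or.inr (neg_injective h)
        have hab' : a + b = α + β := by
          rcases hm1 with h | h | h
          · exact h
          · exact absurd (show a + b + α = 0 by rw [h, neg_add_cancel]) (hP3 a ha b hb α hα)
          · exact absurd (show a + b + β = 0 by rw [h, neg_add_cancel]) (hP3 a ha b hb β hβ)
        rcases ha' with rfl | rfl <;> rcases hb' with rfl | rfl
        · exact hx1 ⟨rfl, add_left_cancel hab'⟩
        · exact hx1 ⟨rfl, rfl⟩
        · exact hx2 ⟨rfl, rfl⟩
        · exact hx2 ⟨rfl, add_right_cancel hab'⟩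
    · rw [hbracket0 _ haΩ _ hbΩ hm (hP2 a ha b hb), Dz]
  have Z2 : ∀ a ∈ Pm, ∀ b ∈ Pm, ¬(a = α ∧ b = α + β) → ¬(a = β ∧ b = α + β) →
      D ![⁅E a, E (-b)⁆, E (-a), E b] = 0 := by
    intro a ha b hb hx1 hx2
    have haΩ := hΩm a ha
    have hbΩ := hΩm b hb
    by_cases hab : a = b
    · subst hab
      exact hDH _ (hbracketH a haΩ) _ _
    · have hsum0 : a + -b ≠ 0 := by
        intro h; exact hab (by rwa [add_neg_eq_zero] at h)
      by_cases hm : a + -b ∈ Ω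
      · rw [hbracket _ haΩ _ (hneg b hbΩ) hm, Dsmul,
          hD0 _ hm _ (hneg a haΩ) _ hbΩ ?eq, mul_zero]
        case eq =>
          intro heq
          obtain ⟨-, hm2, hm3, -, -⟩ := msub _ _ _ heq
          have ha' : a = α ∨ a = β := by
            rcases hm2 with h | h | h
            · exact absurd h (by intro h'; exact negcase a ha (α + β) hαβ h')
            · exact Or.inl (neg_injective h)
            · exact Or.inr (neg_injective h)
          have hb' : b = α + β := by
            rcases hm3 with h | h | h
            · exact h
            · exact absurd h (notneg b hb α hα)
            · exact absurd h (notneg b hb β hβ)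
          rcases ha' with rfl | rfl
          · exact hx1 ⟨rfl, hb'⟩
          · exact hx2 ⟨rfl, hb'⟩
      · rw [hbracket0 _ haΩ _ (hneg b hbΩ) hm hsum0, Dz]
  have Z3 : ∀ a ∈ Pm, ∀ b ∈ Pm, ¬(a = α + β ∧ b = α) → ¬(a = α + β ∧ b = β) →
      D ![⁅E (-a), E b⁆, E a, E (-b)] = 0 := by
    intro a ha b hb hx1 hx2
    have haΩ := hΩm a ha
    have hbΩ := hΩm b hb
    by_cases hab : a = b
    · subst hab
      have h := hbracketH (-a) (hneg a haΩ)
      rw [neg_neg] at h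
      exact hDH _ h _ _
    · have hsum0 : -a + b ≠ 0 := by
        intro h; exact hab (by rwa [neg_add_eq_zero] at h)
      by_cases hm : -a + b ∈ Ω
      · rw [hbracket _ (hneg a haΩ) _ hbΩ hm, Dsmul,
          hD0 _ hm _ haΩ _ (hneg b hbΩ) ?eq, mul_zero]
        case eq =>
          intro heq
          obtain ⟨-, hm2, hm3, -, -⟩ := msub _ _ _ heq
          have ha' : a = α + β := by
            rcases hm2 with h | h | h
            · exact h
            · exact absurd h (notneg a ha α hα)
            · exact absurd h (notneg a ha β hβ)
          have hb' : b = α ∨ b = β := by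
            rcases hm3 with h | h | h
            · exact absurd h (by intro h'; exact negcase b hb (α + β) hαβ h')
            · exact Or.inl (neg_injective h)
            · exact Or.inr (neg_injective h)
          rcases hb' with rfl | rfl
          · exact hx1 ⟨ha', rfl⟩
          · exact hx2 ⟨ha', rfl⟩
      · rw [hbracket0 _ (hneg a haΩ) _ hbΩ hm hsum0, Dz]
  have Z4 : ∀ a ∈ Pm, ∀ b ∈ Pm, D ![⁅E (-a), E (-b)⁆, E a, E b] = 0 := by
    intro a ha b hb
    have haΩ := hΩm a ha
    have hbΩ := hΩm b hb
    have hsum0 : -a + -b ≠ 0 := by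
      intro h
      apply hP2 a ha b hb
      have h' : a + b = -(-a + -b) := by abel
      rw [h', h, neg_zero]
    by_cases hm : -a + -b ∈ Ω
    · rw [hbracket _ (hneg a haΩ) _ (hneg b hbΩ) hm, Dsmul,
        hD0 _ hm _ haΩ _ hbΩ ?eq, mul_zero]
      case eq =>
        intro heq
        obtain ⟨-, -, -, hm4, hm5⟩ := msub _ _ _ heq
        have h1 : α = a + b := by
          rcases hm4 with h | h | h
          · have h' : -α = -(a + b) := by rw [h]; abel
            exact neg_injective h'
          · exact absurd h.symm (notneg a ha α hα)
          · exact absurd h.symm (notneg b hb α hα)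
        have h2 : β = a + b := by
          rcases hm5 with h | h | h
          · have h' : -β = -(a + b) := by rw [h]; abel
            exact neg_injective h'
          · exact absurd h.symm (notneg a ha β hβ)
          · exact absurd h.symm (notneg b hb β hβ)
        exact hαβne (h1.trans h2.symm)
    · rw [hbracket0 _ (hneg a haΩ) _ (hneg b hbΩ) hm hsum0, Dz]
  have hcyc1 : N α β = N β (-(α + β)) :=
    hcyc α hαΩ β hβΩ (-(α + β)) (hneg _ hαβΩ) (by abel)
  have hcyc2 : N β (-(α + β)) = N (-(α + β)) α :=
    hcyc β hβΩ (-(α + β)) (hneg _ hαβΩ) α hαΩ (by abel)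
  have hbr1 : ⁅E α, E β⁆ = N α β • E (α + β) := hbracket α hαΩ β hβΩ hαβΩ
  have hbr1' : ⁅E β, E α⁆ = -(N α β • E (α + β)) := by rw [← lie_skew, hbr1]
  have hbr2 : ⁅E (-(α + β)), E α⁆ = N α β • E (-β) := by
    have e1 : -(α + β) + α = -β := by abel
    rw [hbracket _ (hneg _ hαβΩ) _ hαΩ (by rw [e1]; exact hneg β hβΩ), e1,
      ← hcyc2, ← hcyc1]
  have hbr2' : ⁅E α, E (-(α + β))⁆ = -(N α β • E (-β)) := by rw [← lie_skew, hbr2]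
  have hbr3 : ⁅E β, E (-(α + β))⁆ = N α β • E (-α) := by
    have e2 : β + -(α + β) = -α := by abel
    rw [hbracket _ hβΩ _ (hneg _ hαβΩ) (by rw [e2]; exact hneg α hαΩ), e2, ← hcyc1]
  have hbr3' : ⁅E (-(α + β)), E β⁆ = -(N α β • E (-α)) := by rw [← lie_skew, hbr3]
  have hx : lf (Submodule.Quotient.mk α) ≠ 0 := hlf α hαΩ (hPm α hα).2
  have hy : lf (Submodule.Quotient.mk β) ≠ 0 := hlf β hβΩ (hPm β hβ).2
  have hz : lf (Submodule.Quotient.mk (α + β)) ≠ 0 := hlf _ hαβΩ (hPm _ hαβ).2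
  have hzxy : lf (Submodule.Quotient.mk (α + β)) =
      lf (Submodule.Quotient.mk α) + lf (Submodule.Quotient.mk β) := by
    rw [show (Submodule.Quotient.mk (α + β) : V ⧸ S) =
      Submodule.Quotient.mk α + Submodule.Quotient.mk β from rfl, map_add]
  rw [← Finset.sum_product']
  have key : ∀ p ∈ Pm ×ˢ Pm,
      (1 / lf (Submodule.Quotient.mk p.1)) * lf (Submodule.Quotient.mk p.2) *
        (D ![⁅E p.1, E p.2⁆, E (-p.1), E (-p.2)] - D ![⁅E p.1, E (-p.2)⁆, E (-p.1), E p.2]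
          - D ![⁅E (-p.1), E p.2⁆, E p.1, E (-p.2)] + D ![⁅E (-p.1), E (-p.2)⁆, E p.1, E p.2]) =
      (if p = (α, β) then (1 / lf (Submodule.Quotient.mk α)) * lf (Submodule.Quotient.mk β) * N α β else 0)
      + (if p = (β, α) then (1 / lf (Submodule.Quotient.mk β)) * lf (Submodule.Quotient.mk α) * N α β else 0)
      + (if p = (α, α + β) then -((1 / lf (Submodule.Quotient.mk α)) * lf (Submodule.Quotient.mk (α + β)) * N α β) else 0)
      + (if p = (β, α + β) then -((1 / lf (Submodule.Quotient.mk β)) * lf (Submodule.Quotient.mk (α + β)) * N α β) else 0)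
      + (if p = (α + β, α) then -((1 / lf (Submodule.Quotient.mk (α + β))) * lf (Submodule.Quotient.mk α) * N α β) else 0)
      + (if p = (α + β, β) then -((1 / lf (Submodule.Quotient.mk (α + β))) * lf (Submodule.Quotient.mk β) * N α β) else 0) := by
    rintro ⟨a, b⟩ hp
    rw [Finset.mem_product] at hp
    obtain ⟨ha, hb⟩ := hp
    dsimp only at ha hb ⊢
    simp only [Prod.mk.injEq]
    by_cases h1 : a = α ∧ b = β
    · obtain ⟨rfl, rfl⟩ := h1
      rw [hbr1, Dsmul, hD1,
          Z2 _ ha _ hb (by rintro ⟨h, h'⟩; first | exact hαβne h | exact hαβne h.symm | exact hαβne h' | exact hαβne h'.symm | exact hαβα h | exact hαβα h.symm | exact hαβα h' | exact hαβα h'.symm | exact hαββ h | exact hαββ h.symm | exact hαββ h' | exact hαββ h'.symm) (by rintro ⟨h, h'⟩; first | exact hαβne h | exact hαβne h.symm | exact hαβne h' | exact hαβne h'.symm | exact hαβα h | exact hαβα h.symm | exact hαβα h' | exact hαβα h'.symm | exact hαββ h | exact hαββ h.symm | exact hαββ h' | exact hαββ h'.symm),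
          Z3 _ ha _ hb (by rintro ⟨h, h'⟩; first | exact hαβne h | exact hαβne h.symm | exact hαβne h' | exact hαβne h'.symm | exact hαβα h | exact hαβα h.symm | exact hαβα h' | exact hαβα h'.symm | exact hαββ h | exact hαββ h.symm | exact hαββ h' | exact hαββ h'.symm) (by rintro ⟨h, h'⟩; first | exact hαβne h | exact hαβne h.symm | exact hαβne h' | exact hαβne h'.symm | exact hαβα h | exact hαβα h.symm | exact hαβα h' | exact hαβα h'.symm | exact hαββ h | exact hαββ h.symm | exact hαββ h' | exact hαββ h'.symm),
          Z4 _ ha _ hb]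
      simp only [eq_self_iff_true, and_self, and_true, true_and, if_true, ite_true,
          hαβne, Ne.symm hαβne, hαβα, Ne.symm hαβα, hαββ, Ne.symm hαββ,
          ne_eq, and_false, false_and, if_false, ite_false]
      ring
    · by_cases h2 : a = β ∧ b = α
      · obtain ⟨rfl, rfl⟩ := h2
        rw [hbr1', Dnegsmul, A6,
            Z2 _ ha _ hb (by rintro ⟨h, h'⟩; first | exact hαβne h | exact hαβne h.symm | exact hαβne h' | exact hαβne h'.symm | exact hαβα h | exact hαβα h.symm | exact hαβα h' | exact hαβα h'.symm | exact hαββ h | exact hαββ h.symm | exact hαββ h' | exact hαββ h'.symm) (by rintro ⟨h, h'⟩; first | exact hαβne h | exact hαβne h.symm | exact hαβne h' | exact hαβne h'.symm | exact hαβα h | exact hαβα h.symm | exact hαβα h' | exact hαβα h'.symm | exact hαββ h | exact hαββ h.symm | exact hαββ h' | exact hαββ h'.symm),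
            Z3 _ ha _ hb (by rintro ⟨h, h'⟩; first | exact hαβne h | exact hαβne h.symm | exact hαβne h' | exact hαβne h'.symm | exact hαβα h | exact hαβα h.symm | exact hαβα h' | exact hαβα h'.symm | exact hαββ h | exact hαββ h.symm | exact hαββ h' | exact hαββ h'.symm) (by rintro ⟨h, h'⟩; first | exact hαβne h | exact hαβne h.symm | exact hαβne h' | exact hαβne h'.symm | exact hαβα h | exact hαβα h.symm | exact hαβα h' | exact hαβα h'.symm | exact hαββ h | exact hαββ h.symm | exact hαββ h' | exact hαββ h'.symm),
            Z4 _ ha _ hb]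
        simp only [eq_self_iff_true, and_self, and_true, true_and, if_true, ite_true,
            hαβne, Ne.symm hαβne, hαβα, Ne.symm hαβα, hαββ, Ne.symm hαββ,
            ne_eq, and_false, false_and, if_false, ite_false]
        ring
      · by_cases h3 : a = α ∧ b = α + β
        · obtain ⟨rfl, rfl⟩ := h3
          rw [Z1 _ ha _ hb (by rintro ⟨h, h'⟩; first | exact hαβne h | exact hαβne h.symm | exact hαβne h' | exact hαβne h'.symm | exact hαβα h | exact hαβα h.symm | exact hαβα h' | exact hαβα h'.symm | exact hαββ h | exact hαββ h.symm | exact hαββ h' | exact hαββ h'.symm) (by rintro ⟨h, h'⟩; first | exact hαβne h | exact hαβne h.symm | exact hαβne h' | exact hαβne h'.symm | exact hαβα h | exact hαβα h.symm | exact hαβα h' | exact hαβα h'.symm | exact hαββ h | exact hαββ h.symm | exact hαββ h' | exact hαββ h'.symm),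
              hbr2', Dnegsmul, A2,
              Z3 _ ha _ hb (by rintro ⟨h, h'⟩; first | exact hαβne h | exact hαβne h.symm | exact hαβne h' | exact hαβne h'.symm | exact hαβα h | exact hαβα h.symm | exact hαβα h' | exact hαβα h'.symm | exact hαββ h | exact hαββ h.symm | exact hαββ h' | exact hαββ h'.symm) (by rintro ⟨h, h'⟩; first | exact hαβne h | exact hαβne h.symm | exact hαβne h' | exact hαβne h'.symm | exact hαβα h | exact hαβα h.symm | exact hαβα h' | exact hαβα h'.symm | exact hαββ h | exact hαββ h.symm | exact hαββ h' | exact hαββ h'.symm),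
              Z4 _ ha _ hb]
          simp only [eq_self_iff_true, and_self, and_true, true_and, if_true, ite_true,
              hαβne, Ne.symm hαβne, hαβα, Ne.symm hαβα, hαββ, Ne.symm hαββ,
              ne_eq, and_false, false_and, if_false, ite_false]
          ring
        · by_cases h4 : a = β ∧ b = α + β
          · obtain ⟨rfl, rfl⟩ := h4
            rw [Z1 _ ha _ hb (by rintro ⟨h, h'⟩; first | exact hαβne h | exact hαβne h.symm | exact hαβne h' | exact hαβne h'.symm | exact hαβα h | exact hαβα h.symm | exact hαβα h' | exact hαβα h'.symm | exact hαββ h | exact hαββ h.symm | exact hαββ h' | exact hαββ h'.symm) (by rintro ⟨h, h'⟩; first | exact hαβne h | exact hαβne h.symm | exact hαβne h' | exact hαβne h'.symm | exact hαβα h | exact hαβα h.symm | exact hαβα h' | exact hαβα h'.symm | exact hαββ h | exact hαββ h.symm | exact hαββ h' | exact hαββ h'.symm),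
                hbr3, Dsmul, A3,
                Z3 _ ha _ hb (by rintro ⟨h, h'⟩; first | exact hαβne h | exact hαβne h.symm | exact hαβne h' | exact hαβne h'.symm | exact hαβα h | exact hαβα h.symm | exact hαβα h' | exact hαβα h'.symm | exact hαββ h | exact hαββ h.symm | exact hαββ h' | exact hαββ h'.symm) (by rintro ⟨h, h'⟩; first | exact hαβne h | exact hαβne h.symm | exact hαβne h' | exact hαβne h'.symm | exact hαβα h | exact hαβα h.symm | exact hαβα h' | exact hαβα h'.symm | exact hαββ h | exact hαββ h.symm | exact hαββ h' | exact hαββ h'.symm),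
                Z4 _ ha _ hb]
            simp only [eq_self_iff_true, and_self, and_true, true_and, if_true, ite_true,
                hαβne, Ne.symm hαβne, hαβα, Ne.symm hαβα, hαββ, Ne.symm hαββ,
                ne_eq, and_false, false_and, if_false, ite_false]
            ring
          · by_cases h5 : a = α + β ∧ b = α
            · obtain ⟨rfl, rfl⟩ := h5
              rw [Z1 _ ha _ hb (by rintro ⟨h, h'⟩; first | exact hαβne h | exact hαβne h.symm | exact hαβne h' | exact hαβne h'.symm | exact hαβα h | exact hαβα h.symm | exact hαβα h' | exact hαβα h'.symm | exact hαββ h | exact hαββ h.symm | exact hαββ h' | exact hαββ h'.symm) (by rintro ⟨h, h'⟩; first | exact hαβne h | exact hαβne h.symm | exact hαβne h' | exact hαβne h'.symm | exact hαβα h | exact hαβα h.symm | exact hαβα h' | exact hαβα h'.symm | exact hαββ h | exact hαββ h.symm | exact hαββ h' | exact hαββ h'.symm),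
                  Z2 _ ha _ hb (by rintro ⟨h, h'⟩; first | exact hαβne h | exact hαβne h.symm | exact hαβne h' | exact hαβne h'.symm | exact hαβα h | exact hαβα h.symm | exact hαβα h' | exact hαβα h'.symm | exact hαββ h | exact hαββ h.symm | exact hαββ h' | exact hαββ h'.symm) (by rintro ⟨h, h'⟩; first | exact hαβne h | exact hαβne h.symm | exact hαβne h' | exact hαβne h'.symm | exact hαβα h | exact hαβα h.symm | exact hαβα h' | exact hαβα h'.symm | exact hαββ h | exact hαββ h.symm | exact hαββ h' | exact hαββ h'.symm),
                  hbr2, Dsmul, A4,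
                  Z4 _ ha _ hb]
              simp only [eq_self_iff_true, and_self, and_true, true_and, if_true, ite_true,
                  hαβne, Ne.symm hαβne, hαβα, Ne.symm hαβα, hαββ, Ne.symm hαββ,
                  ne_eq, and_false, false_and, if_false, ite_false]
              ring
            · by_cases h6 : a = α + β ∧ b = β
              · obtain ⟨rfl, rfl⟩ := h6
                rw [Z1 _ ha _ hb (by rintro ⟨h, h'⟩; first | exact hαβne h | exact hαβne h.symm | exact hαβne h' | exact hαβne h'.symm | exact hαβα h | exact hαβα h.symm | exact hαβα h' | exact hαβα h'.symm | exact hαββ h | exact hαββ h.symm | exact hαββ h' | exact hαββ h'.symm) (by rintro ⟨h, h'⟩; first | exact hαβne h | exact hαβne h.symm | exact hαβne h' | exact hαβne h'.symm | exact hαβα h | exact hαβα h.symm | exact hαβα h' | exact hαβα h'.symm | exact hαββ h | exact hαββ h.symm | exact hαββ h' | exact hαββ h'.symm),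
                    Z2 _ ha _ hb (by rintro ⟨h, h'⟩; first | exact hαβne h | exact hαβne h.symm | exact hαβne h' | exact hαβne h'.symm | exact hαβα h | exact hαβα h.symm | exact hαβα h' | exact hαβα h'.symm | exact hαββ h | exact hαββ h.symm | exact hαββ h' | exact hαββ h'.symm) (by rintro ⟨h, h'⟩; first | exact hαβne h | exact hαβne h.symm | exact hαβne h' | exact hαβne h'.symm | exact hαβα h | exact hαβα h.symm | exact hαβα h' | exact hαβα h'.symm | exact hαββ h | exact hαββ h.symm | exact hαββ h' | exact hαββ h'.symm),
                    hbr3', Dnegsmul, A5,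
                    Z4 _ ha _ hb]
                simp only [eq_self_iff_true, and_self, and_true, true_and, if_true, ite_true,
                    hαβne, Ne.symm hαβne, hαβα, Ne.symm hαβα, hαββ, Ne.symm hαββ,
                    ne_eq, and_false, false_and, if_false, ite_false]
                ring
              · rw [if_neg h1, if_neg h2, if_neg h3, if_neg h4, if_neg h5, if_neg h6,
                    Z1 _ ha _ hb h1 h2, Z2 _ ha _ hb h3 h4, Z3 _ ha _ hb h5 h6, Z4 _ ha _ hb]
                ring
  rw [Finset.sum_congr rfl key]
  have hmem1 : ((α, β) : V × V) ∈ Pm ×ˢ Pm := Finset.mem_product.mpr ⟨hα, hβ⟩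
  have hmem2 : ((β, α) : V × V) ∈ Pm ×ˢ Pm := Finset.mem_product.mpr ⟨hβ, hα⟩
  have hmem3 : ((α, α + β) : V × V) ∈ Pm ×ˢ Pm := Finset.mem_product.mpr ⟨hα, hαβ⟩
  have hmem4 : ((β, α + β) : V × V) ∈ Pm ×ˢ Pm := Finset.mem_product.mpr ⟨hβ, hαβ⟩
  have hmem5 : ((α + β, α) : V × V) ∈ Pm ×ˢ Pm := Finset.mem_product.mpr ⟨hαβ, hα⟩
  have hmem6 : ((α + β, β) : V × V) ∈ Pm ×ˢ Pm := Finset.mem_product.mpr ⟨hαβ, hβ⟩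
  rw [Finset.sum_add_distrib, Finset.sum_add_distrib, Finset.sum_add_distrib,
    Finset.sum_add_distrib, Finset.sum_add_distrib,
    Finset.sum_ite_eq' _ _ (fun _ => _), Finset.sum_ite_eq' _ _ (fun _ => _),
    Finset.sum_ite_eq' _ _ (fun _ => _), Finset.sum_ite_eq' _ _ (fun _ => _),
    Finset.sum_ite_eq' _ _ (fun _ => _), Finset.sum_ite_eq' _ _ (fun _ => _),
    if_pos hmem1, if_pos hmem2, if_pos hmem3, if_pos hmem4, if_pos hmem5, if_pos hmem6]
  rw [hzxy]
  have hz' : lf (Submodule.Quotient.mk α) + lf (Submodule.Quotient.mk β) ≠ 0 := by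
    rw [← hzxy]; exact hz
  have harith : ∀ x y n : ℂ, x ≠ 0 → y ≠ 0 → x + y ≠ 0 →
      1 / x * y * n + 1 / y * x * n + -(1 / x * (x + y) * n) + -(1 / y * (x + y) * n)
        + -(1 / (x + y) * x * n) + -(1 / (x + y) * y * n) = -3 * n := by
    intro x y n hx hy hxy
    have h1 : 1 / x * y * n + -(1 / x * (x + y) * n) = -n := by
      field_simp
      ring
    have h2 : 1 / y * x * n + -(1 / y * (x + y) * n) = -n := by
      field_simp
      ring
    have h3 : -(1 / (x + y) * x * n) + -(1 / (x + y) * y * n) = -n := by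
      field_simp
      ring
    calc 1 / x * y * n + 1 / y * x * n + -(1 / x * (x + y) * n) + -(1 / y * (x + y) * n)
        + -(1 / (x + y) * x * n) + -(1 / (x + y) * y * n)
        = (1 / x * y * n + -(1 / x * (x + y) * n)) + (1 / y * x * n + -(1 / y * (x + y) * n))
          + (-(1 / (x + y) * x * n) + -(1 / (x + y) * y * n)) := by ring
      _ = -n + -n + -n := by rw [h1, h2, h3]
      _ = -3 * n := by ring
  exact harith _ _ _ hx hy hz'
end
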